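/- arXiv:1911.04760 — 8 statements merged into one kernel-verified Lean document; each statement's English description precedes it below -/
import Mathlib

section
/- For any integer N ≥ 2 and complex numbers y_1, ..., y_N and η, the determinant of the N×N matrix A(y,η) — whose first N−1 rows have sin(y_j) in column j, −sin(y_{j+1}) in column j+1, and zeros elsewhere, and whose last row is (cos(y_1), cos(y_2), ..., cos(y_{N−1}), cos(y_N) + η·sin(y_N)) — equals F_N(y) + η·F_D(y), where F_N(y) = ∑_{j=1}^N cos(y_j) ∏_{k≠j} sin(y_k) and F_D(y) = ∏_{j=1}^N sin(y_j). -/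
open Complex Finset

/-!
`A` is the case `s = sin y`, `v = cos y + η sin(y_N) e_N` of `M(s, v) = bidiagWithLastRow s v`,
whose rows are `sᵢ eᵢ - sᵢ₊₁ eᵢ₊₁` followed by `v`. Expanding `det M(s, v)` along the first column, only the first
and the last row contribute: the first gives `s₀ det M(s', v')` for the shifted vectors, the last
gives `v₀` times a lower triangular minor with diagonal `-s₁, …, -sₙ`, whose sign cancels the
cofactor sign. By induction `det M(s, v) = ∑ₖ vₖ ∏_{i ≠ k} sᵢ`, which is linear in `v`.
-/

theorem Fin.prod_univ_erase {M : Type*} [CommMonoid M] {n : ℕ} (f : Fin (n + 1) → M)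
    (p : Fin (n + 1)) : ∏ i ∈ univ.erase p, f i = ∏ i : Fin n, f (p.succAbove i) := by
  rw [Fin.univ_succAbove n p, Finset.erase_cons, Finset.prod_map]
  rfl

theorem Fin.prod_univ_erase_succ {M : Type*} [CommMonoid M] {n : ℕ} (f : Fin (n + 2) → M)
    (k : Fin (n + 1)) :
    ∏ i ∈ univ.erase k.succ, f i = f 0 * ∏ i ∈ univ.erase k, f i.succ := by
  simp only [Fin.prod_univ_erase, Fin.prod_univ_succ, Fin.succ_succAbove_zero,
    Fin.succ_succAbove_succ]

section

variable {R : Type*} [CommRing R]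

def bidiagWithLastRow {N : ℕ} (s v : Fin N → R) : Matrix (Fin N) (Fin N) R :=
  Matrix.of fun i j =>
    if (i : ℕ) + 1 < N then (if j = i then s i else if (j : ℕ) = i + 1 then -s j else 0)
    else v j

variable {n : ℕ}

theorem bidiagWithLastRow_castSucc (s v : Fin (n + 1) → R) (i : Fin n) (j : Fin (n + 1)) :
    bidiagWithLastRow s v i.castSucc j =
      if j = i.castSucc then s i.castSucc else if j = i.succ then -s i.succ else 0 := by
  have hi : (i : ℕ) + 1 < n + 1 := by omega
  simp only [bidiagWithLastRow, Matrix.of_apply, Fin.val_castSucc, hi, if_true]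
  by_cases hj : j = i.succ
  · simp [hj, Fin.castSucc_lt_succ.ne']
  · have hj' : (j : ℕ) ≠ i + 1 := fun h => hj (Fin.ext h)
    rw [if_neg hj, if_neg hj']

theorem bidiagWithLastRow_last (s v : Fin (n + 1) → R) (j : Fin (n + 1)) :
    bidiagWithLastRow s v (Fin.last n) j = v j := by
  simp [bidiagWithLastRow]

theorem bidiagWithLastRow_zero_zero (s v : Fin (n + 2) → R) :
    bidiagWithLastRow s v 0 0 = s 0 := by
  simp [bidiagWithLastRow]

theorem bidiagWithLastRow_apply_zero_right (s v : Fin (n + 2) → R) {i : Fin (n + 2)}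
    (h0 : i ≠ 0) (hlast : i ≠ Fin.last _) : bidiagWithLastRow s v i 0 = 0 := by
  have : (i : ℕ) + 1 < n + 2 := by have := Fin.val_lt_last hlast; omega
  rw [bidiagWithLastRow, Matrix.of_apply, if_pos this, if_neg (Ne.symm h0), if_neg (by simp)]

theorem bidiagWithLastRow_submatrix_succ_succ (s v : Fin (n + 2) → R) :
    (bidiagWithLastRow s v).submatrix Fin.succ Fin.succ =
      bidiagWithLastRow (fun i => s i.succ) (fun i => v i.succ) := by
  ext i j
  simp [bidiagWithLastRow, Fin.succ_inj]

theorem det_bidiagWithLastRow_submatrix_castSucc_succ (s v : Fin (n + 2) → R) :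
    ((bidiagWithLastRow s v).submatrix Fin.castSucc Fin.succ).det =
      (-1) ^ (n + 1) * ∏ i : Fin (n + 1), s i.succ := by
  have hlower : ((bidiagWithLastRow s v).submatrix Fin.castSucc Fin.succ).IsLowerTriangular := by
    intro i j hij
    have : (i : ℕ) < j := hij
    simp only [Matrix.submatrix_apply, bidiagWithLastRow_castSucc, Fin.ext_iff, Fin.val_succ,
      Fin.val_castSucc]
    rw [if_neg (by omega), if_neg (by omega)]
  rw [Matrix.det_of_isLowerTriangular _ hlower]
  simp [bidiagWithLastRow_castSucc, Fin.castSucc_lt_succ.ne', Finset.prod_neg]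

theorem det_bidiagWithLastRow_succ_succ (s v : Fin (n + 2) → R) :
    (bidiagWithLastRow s v).det =
      s 0 * (bidiagWithLastRow (fun i => s i.succ) (fun i => v i.succ)).det +
        v 0 * ∏ i : Fin (n + 1), s i.succ := by
  rw [Matrix.det_succ_column_zero, Fintype.sum_eq_add 0 (Fin.last _) (Fin.last_pos.ne)
    fun i hi => by rw [bidiagWithLastRow_apply_zero_right s v hi.1 hi.2, mul_zero, zero_mul]]
  rw [bidiagWithLastRow_zero_zero, bidiagWithLastRow_last, Fin.succAbove_zero,
    Fin.succAbove_last, bidiagWithLastRow_submatrix_succ_succ,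
    det_bidiagWithLastRow_submatrix_castSucc_succ, Fin.val_zero, Fin.val_last, pow_zero, one_mul]
  have hsign : ((-1 : R) ^ (n + 1)) * (-1) ^ (n + 1) = 1 := by
    rw [← mul_pow, neg_one_mul, neg_neg, one_pow]
  linear_combination (v 0 * ∏ i : Fin (n + 1), s i.succ) * hsign

theorem det_bidiagWithLastRow (s v : Fin (n + 1) → R) :
    (bidiagWithLastRow s v).det = ∑ k, v k * ∏ i ∈ univ.erase k, s i := by
  induction n with
  | zero => simp [bidiagWithLastRow]
  | succ n ih =>
    rw [det_bidiagWithLastRow_succ_succ, ih]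
    conv_rhs => rw [Fin.sum_univ_succ, Fin.prod_univ_erase s 0]
    simp only [Fin.prod_univ_erase_succ, Fin.succAbove_zero, mul_sum]
    rw [add_comm]
    exact congrArg _ (sum_congr rfl fun k _ => mul_left_comm _ _ _)

end

/-- Determinant of the secular matrix of a quantum star graph:
`det A(y,η) = F_N(y) + η F_D(y)`. -/
theorem secular_det (N : ℕ) (hN : 2 ≤ N) (y : Fin N → ℂ) (η : ℂ)
    (A : Matrix (Fin N) (Fin N) ℂ)
    (hA : ∀ i j : Fin N, A i j =
      if (i : ℕ) + 1 < N then
        (if j = i then Complex.sin (y i)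
         else if (j : ℕ) = (i : ℕ) + 1 then -Complex.sin (y j) else 0)
      else
        (if (j : ℕ) + 1 = N then Complex.cos (y j) + η * Complex.sin (y j)
         else Complex.cos (y j))) :
    A.det = (∑ j : Fin N, Complex.cos (y j) * ∏ k ∈ Finset.univ.erase j, Complex.sin (y k))
      + η * ∏ j : Fin N, Complex.sin (y j) := by
  obtain ⟨n, rfl⟩ : ∃ n, N = n + 1 := ⟨N - 1, by omega⟩
  have hA' : A = bidiagWithLastRow (fun j => sin (y j))
      (fun j => cos (y j) + if j = Fin.last n then η * sin (y j) else 0) := by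
    ext i j
    rw [hA]
    simp only [bidiagWithLastRow, Matrix.of_apply, Fin.ext_iff, Fin.val_last, add_left_inj]
    split_ifs <;> simp
  rw [hA', det_bidiagWithLastRow]
  simp only [add_mul, sum_add_distrib, ite_mul, zero_mul, sum_ite_eq', mem_univ, if_true,
    mul_assoc]
  rw [mul_prod_erase univ (fun j => sin (y j)) (mem_univ _)]
end

section
/- Let N ≥ 2, ℓ_1,...,ℓ_N > 0, and suppose there exist j ≠ k with ℓ_j/ℓ_k ∈ ℚ. Let τ ∈ (πℤ/ℓ_j) ∩ (πℤ/ℓ_k) be nonzero. Then for every α ∈ ℂ, τ² is an eigenvalue of the Robin star-graph Laplacian H_α, i.e. the matrix A(τℓ, α/τ) is singular; moreover the dimension of its kernel equals (#{i : τℓ_i ∈ πℤ}) − 1, independent of α. -/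
/-!
If `sin (τ ℓ_j) = 0` for one edge, the continuity rows `s_i x_i = s_{i+1} x_{i+1}` of the
secular matrix (`s = sin (τ ℓ)`, `c = cos (τ ℓ)`) force `s_i x_i = 0` for every `i`, and the
Robin row collapses to `∑ c_i x_i = 0`, independently of `α`. So the kernel is the hyperplane
`∑ c_i x_i = 0` inside the vectors supported on `Z = {i | s_i = 0}`. It is a proper hyperplane
because `c_j = ±1`, hence has dimension `#Z - 1`, which is positive as `j, k ∈ Z`.
-/

open Complex Finset

section

variable {K V : Type*} [Field K] [AddCommGroup V] [Module K V] [FiniteDimensional K V]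

theorem Submodule.finrank_inf_ker_add_one {W : Submodule K V} {f : Module.Dual K V} {x : V}
    (hxW : x ∈ W) (hfx : f x ≠ 0) :
    Module.finrank K ↥(W ⊓ LinearMap.ker f) + 1 = Module.finrank K W := by
  have hf : f.domRestrict W ≠ 0 := fun h => hfx (LinearMap.congr_fun h ⟨x, hxW⟩)
  rw [← Module.Dual.finrank_ker_add_one_of_ne_zero hf, LinearMap.ker_domRestrict,
    ← Submodule.map_comap_subtype, Submodule.finrank_map_subtype_eq]

end

theorem Matrix.finrank_ker_diagonal {K n : Type*} [Field K] [Fintype n] [DecidableEq n]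
    [DecidableEq K] (w : n → K) :
    Module.finrank K (LinearMap.ker (diagonal w).mulVecLin) = #{i | w i = 0} := by
  have h := LinearMap.finrank_range_add_finrank_ker (diagonal w).mulVecLin
  rw [← Matrix.rank, Matrix.rank_diagonal, Module.finrank_fintype_fun_eq_card,
    Fintype.card_subtype] at h
  have hsplit := card_filter_add_card_filter_not (s := univ) (fun i => w i = 0)
  rw [card_univ] at hsplit
  simp only [ne_eq] at h
  omega

section SecularMatrix

open Matrix

variable {N : ℕ}

section CommRing

variable {R : Type*} [CommRing R]

/-- The matrix `A(y, η)` with `s = sin y`, `c = cos y`: the first `N - 1` rows encode continuity at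
the centre, the last one the Robin condition. -/
def secularMatrix (s c : Fin N → R) (η : R) : Matrix (Fin N) (Fin N) R :=
  Matrix.of fun i j =>
    if (i : ℕ) + 1 < N then
      (if j = i then s i else if (j : ℕ) = (i : ℕ) + 1 then -s j else 0)
    else
      (if (j : ℕ) + 1 = N then c j + η * s j else c j)

variable {s c : Fin N → R} {η : R} {x : Fin N → R}

theorem secularMatrix_mulVec_of_lt (i : Fin N) (h : (i : ℕ) + 1 < N) :
    (secularMatrix s c η *ᵥ x) i = s i * x i - s ⟨i + 1, h⟩ * x ⟨i + 1, h⟩ := by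
  have hrow : secularMatrix s c η i =
      Pi.single i (s i) - Pi.single ⟨i + 1, h⟩ (s ⟨i + 1, h⟩) := by
    ext j
    simp only [secularMatrix, of_apply, if_pos h, Pi.sub_apply, Pi.single_apply, Fin.ext_iff]
    grind
  rw [mulVec, hrow, sub_dotProduct, single_dotProduct, single_dotProduct]

theorem secularMatrix_mulVec_of_not_lt (i : Fin N) (h : ¬(i : ℕ) + 1 < N) :
    (secularMatrix s c η *ᵥ x) i = c ⬝ᵥ x + η * (s i * x i) := by
  have hrow : secularMatrix s c η i = c + Pi.single i (η * s i) := by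
    ext j
    simp only [secularMatrix, of_apply, if_neg h, Pi.add_apply, Pi.single_apply]
    grind
  rw [mulVec, hrow, add_dotProduct, single_dotProduct, mul_assoc]

theorem mul_apply_eq_of_secularMatrix_mulVec_eq_zero (hx : secularMatrix s c η *ᵥ x = 0)
    (i i' : Fin N) : s i * x i = s i' * x i' := by
  suffices h : ∀ i : Fin N, s i * x i = s ⟨0, i.pos⟩ * x ⟨0, i.pos⟩ by rw [h i, h i']
  rintro ⟨n, hn⟩
  induction n with
  | zero => rfl
  | succ n ih =>
    have hrow := congrFun hx ⟨n, by omega⟩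
    rw [secularMatrix_mulVec_of_lt _ hn, Pi.zero_apply, sub_eq_zero] at hrow
    rw [← hrow, ih]

theorem secularMatrix_mulVec_eq_zero_iff {j : Fin N} (hj : s j = 0) :
    secularMatrix s c η *ᵥ x = 0 ↔ (∀ i, s i * x i = 0) ∧ c ⬝ᵥ x = 0 := by
  constructor
  · intro hx
    have hzero (i : Fin N) : s i * x i = 0 := by
      rw [mul_apply_eq_of_secularMatrix_mulVec_eq_zero hx i j, hj, zero_mul]
    have hlast := congrFun hx ⟨N - 1, by have := j.isLt; omega⟩
    rw [secularMatrix_mulVec_of_not_lt _ (by simp only; omega), hzero, mul_zero, add_zero] at hlast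
    exact ⟨hzero, hlast⟩
  · rintro ⟨hzero, hc⟩
    ext i
    by_cases h : (i : ℕ) + 1 < N
    · rw [secularMatrix_mulVec_of_lt _ h, hzero, hzero, sub_zero, Pi.zero_apply]
    · rw [secularMatrix_mulVec_of_not_lt _ h, hc, hzero, mul_zero, add_zero, Pi.zero_apply]

theorem ker_secularMatrix_mulVecLin {j : Fin N} (hj : s j = 0) :
    LinearMap.ker (secularMatrix s c η).mulVecLin =
      LinearMap.ker (diagonal s).mulVecLin ⊓ LinearMap.ker (dotProductBilin R R c) := by
  ext x
  simp [secularMatrix_mulVec_eq_zero_iff hj, funext_iff, mulVec_diagonal]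

end CommRing

variable {K : Type*} [Field K] {s c : Fin N → K} {η : K}

theorem finrank_ker_secularMatrix [DecidableEq K] {j : Fin N} (hs : s j = 0) (hc : c j ≠ 0) :
    Module.finrank K (LinearMap.ker (secularMatrix s c η).mulVecLin) = #{i | s i = 0} - 1 := by
  have hsplit := Submodule.finrank_inf_ker_add_one (f := dotProductBilin K K c)
    (x := Pi.single j 1) (W := LinearMap.ker (diagonal s).mulVecLin)
    (by simp [hs]) (by simpa using hc)
  rw [ker_secularMatrix_mulVecLin hs, ← finrank_ker_diagonal, ← hsplit, Nat.add_sub_cancel]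

theorem det_secularMatrix_eq_zero {j k : Fin N} (hjk : j ≠ k) (hsj : s j = 0) (hsk : s k = 0)
    (hc : c j ≠ 0) :
    (secularMatrix s c η).det = 0 := by
  classical
  have hcard : 2 ≤ #{i | s i = 0} :=
    one_lt_card.mpr ⟨j, by simpa using hsj, k, by simpa using hsk, hjk⟩
  have hpos : 0 < Module.finrank K (LinearMap.ker (secularMatrix s c η).mulVecLin) := by
    rw [finrank_ker_secularMatrix hsj hc]
    omega
  obtain ⟨x, hx, hx0⟩ :=
    Submodule.exists_mem_ne_zero_of_ne_bot (Submodule.one_le_finrank_iff.mp hpos)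
  exact exists_mulVec_eq_zero_iff.mp ⟨x, hx0, hx⟩

end SecularMatrix

theorem dirichlet_eigenvalue_persists_general (N : ℕ)
    (ℓ : Fin N → ℝ)
    (j k : Fin N) (hjk : j ≠ k)
    (τ : ℝ)
    (hj : ∃ m : ℤ, τ * ℓ j = m * Real.pi) (hk : ∃ m : ℤ, τ * ℓ k = m * Real.pi)
    (α : ℂ) (A : Matrix (Fin N) (Fin N) ℂ)
    (hA : ∀ i j' : Fin N, A i j' =
      if (i : ℕ) + 1 < N then
        (if j' = i then Complex.sin ((τ * ℓ i : ℝ) : ℂ)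
         else if (j' : ℕ) = (i : ℕ) + 1 then -Complex.sin ((τ * ℓ j' : ℝ) : ℂ) else 0)
      else
        (if (j' : ℕ) + 1 = N then
            Complex.cos ((τ * ℓ j' : ℝ) : ℂ) + (α / (τ : ℂ)) * Complex.sin ((τ * ℓ j' : ℝ) : ℂ)
         else Complex.cos ((τ * ℓ j' : ℝ) : ℂ))) :
    A.det = 0 ∧
    Module.finrank ℂ (LinearMap.ker A.mulVecLin)
      = (Finset.univ.filter (fun i : Fin N => Real.sin (τ * ℓ i) = 0)).card - 1 := by
  set s : Fin N → ℂ := fun i => Complex.sin ((τ * ℓ i : ℝ) : ℂ)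
  set c : Fin N → ℂ := fun i => Complex.cos ((τ * ℓ i : ℝ) : ℂ)
  have hA : A = secularMatrix s c (α / τ) := Matrix.ext hA
  have hs_iff (i : Fin N) : s i = 0 ↔ Real.sin (τ * ℓ i) = 0 := by
    simp only [s, ← Complex.ofReal_sin, Complex.ofReal_eq_zero]
  have hsj : s j = 0 := by
    obtain ⟨m, hm⟩ := hj
    rw [hs_iff, hm, Real.sin_int_mul_pi]
  have hsk : s k = 0 := by
    obtain ⟨m, hm⟩ := hk
    rw [hs_iff, hm, Real.sin_int_mul_pi]
  have hcj : c j ≠ 0 := by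
    change Complex.cos _ ≠ 0
    rcases Complex.sin_eq_zero_iff_cos_eq.mp hsj with h | h <;> rw [h] <;> norm_num
  refine ⟨hA ▸ det_secularMatrix_eq_zero hjk hsj hsk hcj, ?_⟩
  classical
  rw [hA, finrank_ker_secularMatrix hsj hcj]
  simp only [hs_iff]

/-- If `τ ≠ 0` lies in `(πℤ/ℓ_j) ∩ (πℤ/ℓ_k)` for two distinct edges with
rationally dependent lengths, then the secular matrix `A(τℓ, α/τ)` is singular for
every `α`, and the dimension of its kernel is `#{i : τ ℓ_i ∈ πℤ} − 1`. -/
theorem dirichlet_eigenvalue_persists (N : ℕ) (hN : 2 ≤ N)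
    (ℓ : Fin N → ℝ) (hℓ : ∀ j, 0 < ℓ j)
    (j k : Fin N) (hjk : j ≠ k) (hrat : ∃ q : ℚ, ℓ j / ℓ k = (q : ℝ))
    (τ : ℝ) (hτ : τ ≠ 0)
    (hj : ∃ m : ℤ, τ * ℓ j = m * Real.pi) (hk : ∃ m : ℤ, τ * ℓ k = m * Real.pi)
    (α : ℂ) (A : Matrix (Fin N) (Fin N) ℂ)
    (hA : ∀ i j' : Fin N, A i j' =
      if (i : ℕ) + 1 < N then
        (if j' = i then Complex.sin ((τ * ℓ i : ℝ) : ℂ)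
         else if (j' : ℕ) = (i : ℕ) + 1 then -Complex.sin ((τ * ℓ j' : ℝ) : ℂ) else 0)
      else
        (if (j' : ℕ) + 1 = N then
            Complex.cos ((τ * ℓ j' : ℝ) : ℂ) + (α / (τ : ℂ)) * Complex.sin ((τ * ℓ j' : ℝ) : ℂ)
         else Complex.cos ((τ * ℓ j' : ℝ) : ℂ))) :
    A.det = 0 ∧
    Module.finrank ℂ (LinearMap.ker A.mulVecLin)
      = (Finset.univ.filter (fun i : Fin N => Real.sin (τ * ℓ i) = 0)).card - 1 :=
  dirichlet_eigenvalue_persists_general N ℓ j k hjk τ hj hk α A hA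
end

section
/- Let N ≥ 2 and y ∈ ℂ^N, η ∈ ℂ. If sin(y_j) ≠ 0 for all j (equivalently F_D(y) ≠ 0), then the kernel of the secular matrix A(y,η) has dimension at most 1. -/
open Complex Finset

/-!
The first `N - 1` rows of `A(y,η)` say that `sin (y j) * x j` takes the same value `c` for every
`j`, so a kernel vector `x` is `c` times the vector `(sin (y j))⁻¹`; the kernel therefore lies in
a line.
-/

theorem Fin.apply_eq_apply_of_forall_consecutive {α : Type*} {n : ℕ} (f : Fin n → α)
    (h : ∀ (k : ℕ) (hk : k + 1 < n), f ⟨k, by omega⟩ = f ⟨k + 1, hk⟩) (i j : Fin n) :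
    f i = f j := by
  have hpos : 0 < n := i.pos
  have h_eq_zero : ∀ (k : ℕ) (hk : k < n), f ⟨k, hk⟩ = f ⟨0, hpos⟩ := by
    intro k
    induction k with
    | zero => intro _; rfl
    | succ k ih => intro hk; rw [← h k hk, ih]
  rw [h_eq_zero i i.isLt, h_eq_zero j j.isLt]

theorem mem_span_inv_of_mul_eq {K : Type*} [Field K] {n : ℕ} {s x : Fin n → K}
    (hs : ∀ i, s i ≠ 0) (h : ∀ i j, s i * x i = s j * x j) :
    x ∈ Submodule.span K {s⁻¹} := by
  rcases n with _ | n
  · rw [Subsingleton.elim x 0]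
    exact zero_mem _
  · refine Submodule.mem_span_singleton.mpr ⟨s 0 * x 0, funext fun j => ?_⟩
    simp only [Pi.smul_apply, Pi.inv_apply, smul_eq_mul, h 0 j]
    field_simp [hs j]

theorem Matrix.ker_mulVecLin_le_span_inv_of_row_eq_single_sub_single {K : Type*} [Field K]
    {n : ℕ} (A : Matrix (Fin n) (Fin n) K) (s : Fin n → K) (hs : ∀ i, s i ≠ 0)
    (hA : ∀ (k : ℕ) (hk : k + 1 < n), A ⟨k, by omega⟩ =
      Pi.single ⟨k, by omega⟩ (s ⟨k, by omega⟩) - Pi.single ⟨k + 1, hk⟩ (s ⟨k + 1, hk⟩)) :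
    LinearMap.ker A.mulVecLin ≤ Submodule.span K {s⁻¹} := by
  intro x hx
  have hAx : A.mulVec x = 0 := hx
  refine mem_span_inv_of_mul_eq hs
    (Fin.apply_eq_apply_of_forall_consecutive (fun i => s i * x i) fun k hk => ?_)
  have hrow : A ⟨k, by omega⟩ ⬝ᵥ x = 0 := congrFun hAx _
  rw [hA k hk, sub_dotProduct, single_dotProduct, single_dotProduct] at hrow
  exact sub_eq_zero.mp hrow

theorem finrank_span_singleton_le_one {K V : Type*} [DivisionRing K] [AddCommGroup V]
    [Module K V] (v : V) : Module.finrank K (Submodule.span K {v}) ≤ 1 := by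
  simpa using finrank_span_le_card (R := K) ({v} : Set V)

theorem ker_dim_le_one_general (N : ℕ) (y : Fin N → ℂ) (η : ℂ)
    (hy : ∀ j, Complex.sin (y j) ≠ 0)
    (A : Matrix (Fin N) (Fin N) ℂ)
    (hA : ∀ i j : Fin N, A i j =
      if (i : ℕ) + 1 < N then
        (if j = i then Complex.sin (y i)
         else if (j : ℕ) = (i : ℕ) + 1 then -Complex.sin (y j) else 0)
      else
        (if (j : ℕ) + 1 = N then Complex.cos (y j) + η * Complex.sin (y j)
         else Complex.cos (y j))) :
    Module.finrank ℂ (LinearMap.ker A.mulVecLin) ≤ 1 := by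
  have hrows : ∀ (k : ℕ) (hk : k + 1 < N), A ⟨k, by omega⟩ =
      Pi.single ⟨k, by omega⟩ (sin (y ⟨k, by omega⟩)) -
        Pi.single ⟨k + 1, hk⟩ (sin (y ⟨k + 1, hk⟩)) := by
    intro k hk
    ext ⟨j, hj⟩
    rw [hA]
    simp only [hk, if_true, Pi.sub_apply, Pi.single_apply, Fin.ext_iff]
    split_ifs <;> first | omega | subst_vars; simp
  calc Module.finrank ℂ (LinearMap.ker A.mulVecLin)
      ≤ Module.finrank ℂ (Submodule.span ℂ {fun j => (sin (y j))⁻¹}) :=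
        Submodule.finrank_mono (A.ker_mulVecLin_le_span_inv_of_row_eq_single_sub_single _ hy hrows)
    _ ≤ 1 := finrank_span_singleton_le_one _

/-- If `sin(y_j) ≠ 0` for all `j`, the kernel of the secular matrix `A(y,η)`
has dimension at most `1`. -/
theorem ker_dim_le_one (N : ℕ) (hN : 2 ≤ N) (y : Fin N → ℂ) (η : ℂ)
    (hy : ∀ j, Complex.sin (y j) ≠ 0)
    (A : Matrix (Fin N) (Fin N) ℂ)
    (hA : ∀ i j : Fin N, A i j =
      if (i : ℕ) + 1 < N then
        (if j = i then Complex.sin (y i)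
         else if (j : ℕ) = (i : ℕ) + 1 then -Complex.sin (y j) else 0)
      else
        (if (j : ℕ) + 1 = N then Complex.cos (y j) + η * Complex.sin (y j)
         else Complex.cos (y j))) :
    Module.finrank ℂ (LinearMap.ker A.mulVecLin) ≤ 1 :=
  ker_dim_le_one_general N y η hy A hA
end

section
/- Let N ≥ 2, ℓ_1,...,ℓ_N > 0, and let τ > 0 satisfy sin(τℓ_j) ≠ 0 for all j and ∑_j cot(τℓ_j) = 0. Set ρ = (∑_j ℓ_j/sin²(τℓ_j))^{-1} and γ_0 = 1/(16eN). Then for all γ ∈ [0,γ_0] and all complex z with |z − τ| ≤ γρ, one has sin(zℓ_j) ≠ 0 for all j, and |ψ_0(z) − (z−τ)/ρ| ≤ γ/2, where ψ_0(z) = −∑_{j=1}^N cot(zℓ_j). -/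
open Complex Real Finset

/-!
Write `a_j = τ ℓ_j` and `w_j = (z - τ) ℓ_j`. Since `∑ cot a_j = 0` and `1/ρ = ∑ ℓ_j / sin² a_j`,
`ψ₀(z) - (z - τ)/ρ = ∑_j (cot a_j - cot (a_j + w_j) - w_j / sin² a_j)`, and
`|z - τ| ≤ γρ` gives `|w_j| ≤ γ sin² a_j` because `ρ ℓ_j ≤ sin² a_j`.
In each term
`cot a - cot (a + w) - w / sin² a = (sin a sin w - w sin (a + w)) / (sin (a + w) sin² a)`;
the numerator is `O(|w|²)` and `|sin (a + w)| ≥ |sin a| / 2`, so the term is at most `8γ²`.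
Summing, `8Nγ² ≤ γ/2` because `Nγ ≤ 1/(16e) < 1/16`.
-/

namespace Complex

lemma norm_cos_sub_one_le {w : ℂ} (hw : ‖w‖ ≤ 1) : ‖cos w - 1‖ ≤ ‖w‖ ^ 2 := by
  have h₁ := norm_exp_sub_one_sub_id_le (x := w * I) (by simpa using hw)
  have h₂ := norm_exp_sub_one_sub_id_le (x := -w * I) (by simpa using hw)
  simp only [norm_mul, norm_neg, norm_I, mul_one] at h₁ h₂
  have hcos : cos w - 1 = ((exp (w * I) - 1 - w * I) + (exp (-w * I) - 1 - -w * I)) / 2 := by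
    rw [cos]; ring
  rw [hcos, norm_div, Complex.norm_two]
  linarith [norm_add_le (exp (w * I) - 1 - w * I) (exp (-w * I) - 1 - -w * I)]

lemma norm_sin_sub_self_le {w : ℂ} (hw : ‖w‖ ≤ 1) : ‖sin w - w‖ ≤ ‖w‖ ^ 2 := by
  have h₁ := norm_exp_sub_one_sub_id_le (x := w * I) (by simpa using hw)
  have h₂ := norm_exp_sub_one_sub_id_le (x := -w * I) (by simpa using hw)
  simp only [norm_mul, norm_neg, norm_I, mul_one] at h₁ h₂
  have hsin : sin w - w =
      ((exp (-w * I) - 1 - -w * I) - (exp (w * I) - 1 - w * I)) * I / 2 := by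
    rw [sin]; linear_combination (-w) * I_sq
  rw [hsin, norm_div, norm_mul, norm_I, mul_one, Complex.norm_two]
  linarith [norm_sub_le (exp (-w * I) - 1 - -w * I) (exp (w * I) - 1 - w * I)]

lemma norm_sin_le_two_mul {w : ℂ} (hw : ‖w‖ ≤ 1) : ‖sin w‖ ≤ 2 * ‖w‖ := by
  have := norm_sin_sub_self_le hw
  have := norm_sub_norm_le (sin w) w
  nlinarith [norm_nonneg w]

section RealBase

variable (a : ℝ) {w : ℂ}

lemma norm_sin_add_sub_sin_le (hw : ‖w‖ ≤ 1) : ‖sin (a + w) - sin a‖ ≤ 3 * ‖w‖ := by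
  have hsa : ‖sin (a : ℂ)‖ ≤ 1 := by
    rw [← ofReal_sin, norm_real]; exact Real.abs_sin_le_one a
  have hca : ‖cos (a : ℂ)‖ ≤ 1 := by
    rw [← ofReal_cos, norm_real]; exact Real.abs_cos_le_one a
  have hcos := norm_cos_sub_one_le hw
  have hsin := norm_sin_le_two_mul hw
  have hid : sin (a + w) - sin a = sin a * (cos w - 1) + cos a * sin w := by
    rw [sin_add]; ring
  calc ‖sin (a + w) - sin a‖ ≤ ‖sin (a : ℂ)‖ * ‖cos w - 1‖ + ‖cos (a : ℂ)‖ * ‖sin w‖ := by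
        rw [hid, ← norm_mul, ← norm_mul]; exact norm_add_le _ _
    _ ≤ 1 * ‖w‖ ^ 2 + 1 * (2 * ‖w‖) := by gcongr
    _ ≤ 3 * ‖w‖ := by nlinarith [norm_nonneg w]

lemma norm_sin_mul_sin_sub_mul_sin_add_le (hw : ‖w‖ ≤ 1) :
    ‖sin a * sin w - w * sin (a + w)‖ ≤ 4 * ‖w‖ ^ 2 := by
  have hsa : ‖sin (a : ℂ)‖ ≤ 1 := by
    rw [← ofReal_sin, norm_real]; exact Real.abs_sin_le_one a
  have hca : ‖cos (a : ℂ)‖ ≤ 1 := by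
    rw [← ofReal_cos, norm_real]; exact Real.abs_cos_le_one a
  have hcos := norm_cos_sub_one_le hw
  have hsin₁ := norm_sin_sub_self_le hw
  have hsin₂ := norm_sin_le_two_mul hw
  have hid : sin a * sin w - w * sin (a + w) =
      sin a * ((sin w - w) - w * (cos w - 1)) - w * (cos a * sin w) := by
    rw [sin_add]; ring
  have hinner : ‖(sin w - w) - w * (cos w - 1)‖ ≤ ‖w‖ ^ 2 + ‖w‖ * ‖w‖ ^ 2 := by
    refine (norm_sub_le _ _).trans ?_
    rw [norm_mul]
    gcongr
  rw [hid]
  calc ‖sin a * ((sin w - w) - w * (cos w - 1)) - w * (cos a * sin w)‖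
      ≤ ‖sin (a : ℂ)‖ * ‖(sin w - w) - w * (cos w - 1)‖ + ‖w‖ * (‖cos (a : ℂ)‖ * ‖sin w‖) := by
        simpa only [norm_mul] using
          norm_sub_le (sin a * ((sin w - w) - w * (cos w - 1))) (w * (cos a * sin w))
    _ ≤ 1 * (‖w‖ ^ 2 + ‖w‖ * ‖w‖ ^ 2) + ‖w‖ * (1 * (2 * ‖w‖)) := by gcongr
    _ ≤ 4 * ‖w‖ ^ 2 := by nlinarith [norm_nonneg w]

end RealBase

lemma cot_sub_cot_add_sub_div_sin_sq {a w : ℂ} (ha : sin a ≠ 0) (haw : sin (a + w) ≠ 0) :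
    cot a - cot (a + w) - w / sin a ^ 2 =
      (sin a * sin w - w * sin (a + w)) / (sin (a + w) * sin a ^ 2) := by
  rw [cot_eq_cos_div_sin, cot_eq_cos_div_sin]
  field_simp
  rw [sin_add, cos_add]
  linear_combination (sin a * sin w) * sin_sq_add_cos_sq a

lemma sin_add_ne_zero_and_norm_cot_sub_cot_add_sub_le {a : ℝ} (ha : Real.sin a ≠ 0) {w : ℂ}
    {γ : ℝ} (hγ : γ ≤ 1 / 16) (hw : ‖w‖ ≤ γ * Real.sin a ^ 2) :
    sin (a + w) ≠ 0 ∧ ‖cot a - cot (a + w) - w / sin a ^ 2‖ ≤ 8 * γ ^ 2 := by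
  set s := |Real.sin a|
  have hs : 0 < s := abs_pos.mpr ha
  have hs₁ : s ≤ 1 := Real.abs_sin_le_one a
  have hsin_a : ‖sin (a : ℂ)‖ = s := by rw [← ofReal_sin, norm_real, Real.norm_eq_abs]
  rw [← sq_abs] at hw
  have hγ₀ : 0 ≤ γ := nonneg_of_mul_nonneg_left ((norm_nonneg w).trans hw) (by positivity)
  have hw₁ : ‖w‖ ≤ 1 := by nlinarith
  have hlow : s / 2 ≤ ‖sin (a + w)‖ := by
    have := norm_sin_add_sub_sin_le a hw₁
    have := norm_sub_norm_le (sin (a : ℂ)) (sin (a + w))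
    rw [norm_sub_rev, hsin_a] at this
    nlinarith
  have hpos : 0 < ‖sin (a + w)‖ := by linarith
  have haw : sin (a + w) ≠ 0 := norm_pos_iff.mp hpos
  refine ⟨haw, ?_⟩
  rw [cot_sub_cot_add_sub_div_sin_sq (by rwa [← ofReal_sin, ofReal_ne_zero]) haw, norm_div,
    norm_mul, norm_pow, hsin_a, div_le_iff₀ (by positivity)]
  calc ‖sin a * sin w - w * sin (a + w)‖ ≤ 4 * ‖w‖ ^ 2 :=
        norm_sin_mul_sin_sub_mul_sin_add_le a hw₁
    _ ≤ 4 * (γ * s ^ 2) ^ 2 := by gcongr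
    _ ≤ 8 * γ ^ 2 * (s / 2 * s ^ 2) := by
        have : s ^ 4 ≤ s ^ 3 := pow_le_pow_of_le_one hs.le hs₁ (by norm_num)
        nlinarith [sq_nonneg γ]
    _ ≤ 8 * γ ^ 2 * (‖sin (a + w)‖ * s ^ 2) := by gcongr

end Complex

lemma Finset.inv_sum_mul_le_one {ι : Type*} {s : Finset ι} {f : ι → ℝ} (hf : ∀ i ∈ s, 0 ≤ f i)
    {j : ι} (hj : j ∈ s) : (∑ i ∈ s, f i)⁻¹ * f j ≤ 1 :=
  inv_mul_le_one_of_le₀ (single_le_sum hf hj) (sum_nonneg hf)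

lemma mul_natCast_le_one_div_sixteen {γ : ℝ} {N : ℕ} (hγ₀ : 0 ≤ γ)
    (hγ : γ ≤ 1 / (16 * Real.exp 1 * N)) : γ * N ≤ 1 / 16 := by
  rcases N.eq_zero_or_pos with rfl | hN
  · simp
  have h16 : (16 : ℝ) * N ≤ 16 * Real.exp 1 * N := by
    have := Real.add_one_le_exp 1
    gcongr; linarith
  rw [le_div_iff₀ (by positivity)] at hγ
  nlinarith

lemma neg_sum_cot_sub_div_eq_sum {ι : Type*} [Fintype ι] (ℓ : ι → ℝ) (τ : ℝ) (z : ℂ)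
    (hzero : ∑ j, Real.cot (τ * ℓ j) = 0) :
    (-∑ j, Complex.cot (z * ℓ j)) - (z - τ) / ((∑ j, ℓ j / Real.sin (τ * ℓ j) ^ 2)⁻¹ : ℝ) =
      ∑ j, (Complex.cot (τ * ℓ j : ℝ) - Complex.cot ((τ * ℓ j : ℝ) + (z - τ) * ℓ j) -
        (z - τ) * ℓ j / Complex.sin (τ * ℓ j : ℝ) ^ 2) := by
  have hcot_zero : ∑ j, Complex.cot (τ * ℓ j : ℝ) = 0 := by
    simpa only [ofReal_sum, ofReal_cot, ofReal_zero] using congrArg ((↑) : ℝ → ℂ) hzero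
  have hlin : (z - τ) / ((∑ j, ℓ j / Real.sin (τ * ℓ j) ^ 2)⁻¹ : ℝ) =
      ∑ j, (z - τ) * ℓ j / Complex.sin (τ * ℓ j : ℝ) ^ 2 := by
    rw [div_eq_mul_inv, ofReal_inv, inv_inv, ofReal_sum, mul_sum]
    refine sum_congr rfl fun j _ => ?_
    push_cast
    ring
  have hzℓ : ∀ j, z * ℓ j = (τ * ℓ j : ℝ) + (z - τ) * ℓ j := fun j => by push_cast; ring
  simp only [hlin, hzℓ, sum_sub_distrib, hcot_zero, zero_sub]

theorem psi0_linearization_general (N : ℕ) (ℓ : Fin N → ℝ) (hℓ : ∀ j, 0 < ℓ j)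
    (τ : ℝ) (hsin : ∀ j, Real.sin (τ * ℓ j) ≠ 0)
    (hzero : ∑ j : Fin N, Real.cot (τ * ℓ j) = 0)
    (ρ : ℝ) (hρ : ρ = (∑ j : Fin N, ℓ j / Real.sin (τ * ℓ j) ^ 2)⁻¹)
    (γ : ℝ) (hγ : γ ∈ Set.Icc 0 (1 / (16 * Real.exp 1 * N)))
    (z : ℂ) (hz : ‖z - (τ : ℂ)‖ ≤ γ * ρ) :
    (∀ j, Complex.sin (z * (ℓ j : ℂ)) ≠ 0) ∧
    ‖(-∑ j : Fin N, Complex.cot (z * (ℓ j : ℂ))) - (z - (τ : ℂ)) / (ρ : ℂ)‖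
      ≤ γ / 2 := by
  obtain ⟨hγ₀, hγ₁⟩ := hγ
  have hγN := mul_natCast_le_one_div_sixteen hγ₀ hγ₁
  have hρℓ : ∀ j, ρ * ℓ j ≤ Real.sin (τ * ℓ j) ^ 2 := fun j => by
    have hsq : 0 < Real.sin (τ * ℓ j) ^ 2 := by have := hsin j; positivity
    have := inv_sum_mul_le_one (f := fun i => ℓ i / Real.sin (τ * ℓ i) ^ 2)
      (fun i _ => div_nonneg (hℓ i).le (sq_nonneg _)) (mem_univ j)
    rwa [← hρ, mul_div_assoc', div_le_one hsq] at this
  have hterm := fun j => by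
    refine sin_add_ne_zero_and_norm_cot_sub_cot_add_sub_le (hsin j)
      (w := (z - τ) * ℓ j) (γ := γ) ?_ ?_
    · have : (1 : ℝ) ≤ N := by exact_mod_cast j.pos
      nlinarith
    · calc ‖(z - τ) * ℓ j‖ = ‖z - τ‖ * ℓ j := by simp [abs_of_pos (hℓ j)]
        _ ≤ γ * ρ * ℓ j := by gcongr; exact (hℓ j).le
        _ ≤ γ * Real.sin (τ * ℓ j) ^ 2 := by rw [mul_assoc]; gcongr; exact hρℓ j
  have hzℓ : ∀ j, z * ℓ j = (τ * ℓ j : ℝ) + (z - τ) * ℓ j := fun j => by push_cast; ring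
  refine ⟨fun j => hzℓ j ▸ (hterm j).1, ?_⟩
  rw [hρ, neg_sum_cot_sub_div_eq_sum ℓ τ z hzero]
  calc _ ≤ ∑ _j : Fin N, 8 * γ ^ 2 := norm_sum_le_of_le _ fun j _ => (hterm j).2
    _ = 8 * γ * (γ * N) := by simp only [sum_const, card_univ, Fintype.card_fin, nsmul_eq_mul]; ring
    _ ≤ γ / 2 := by nlinarith

/-- On the disk `D(τ, γρ)` with `γ ≤ γ₀ = 1/(16eN)`, the secular function
`ψ₀(z) = −∑ cot(z ℓ_j)` has no singularity and is close to its linearization: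
`|ψ₀(z) − (z−τ)/ρ| ≤ γ/2`. -/
theorem psi0_linearization (N : ℕ) (hN : 2 ≤ N) (ℓ : Fin N → ℝ) (hℓ : ∀ j, 0 < ℓ j)
    (τ : ℝ) (hτ : 0 < τ) (hsin : ∀ j, Real.sin (τ * ℓ j) ≠ 0)
    (hzero : ∑ j : Fin N, Real.cot (τ * ℓ j) = 0)
    (ρ : ℝ) (hρ : ρ = (∑ j : Fin N, ℓ j / Real.sin (τ * ℓ j) ^ 2)⁻¹)
    (γ : ℝ) (hγ : γ ∈ Set.Icc 0 (1 / (16 * Real.exp 1 * N)))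
    (z : ℂ) (hz : ‖z - (τ : ℂ)‖ ≤ γ * ρ) :
    (∀ j, Complex.sin (z * (ℓ j : ℂ)) ≠ 0) ∧
    ‖(-∑ j : Fin N, Complex.cot (z * (ℓ j : ℂ))) - (z - (τ : ℂ)) / (ρ : ℂ)‖
      ≤ γ / 2 :=
  psi0_linearization_general N ℓ hℓ τ hsin hzero ρ hρ γ hγ z hz
end

section
/- Let N ≥ 2, ℓ_1,...,ℓ_N > 0, τ > 0 with sin(τℓ_j) ≠ 0 for all j and ∑_j cot(τℓ_j) = 0, ρ = (∑_j ℓ_j/sin²(τℓ_j))^{-1}, and γ_0 = 1/(16eN). Then for every z ∈ ℂ with |z − τ| ≤ γ_0 ρ one has |ψ_0''(z)| ≤ (16e/ρ^{3/2}) ∑_{j=1}^N √ℓ_j, where ψ_0(z) = −∑_j cot(zℓ_j). -/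
open Complex Real Finset

/-!
On the disk, `|Im (zℓ_j)| ≤ ℓ_j |z - τ| ≤ 1`, so `|cos (zℓ_j)| ≤ e` and `sin` is `e`-Lipschitz
along the segment from `τℓ_j` to `zℓ_j`. Since `ℓ_j ρ ≤ sin² (τℓ_j) ≤ 1` by the definition of `ρ`,
`sin (zℓ_j)` differs from `sin (τℓ_j)` by at most `ℓ_j ρ / 16 ≤ √(ℓ_j ρ) / 2`, which leaves
`|sin (zℓ_j)| ≥ √(ℓ_j ρ) / 2`. Each term of `ψ₀''` is then at most
`ℓ_j² e / (√(ℓ_j ρ) / 2)³ = 8e √ℓ_j / ρ^{3/2}`.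
-/

namespace Complex

lemma norm_cos_le_exp_abs_im (w : ℂ) : ‖cos w‖ ≤ Real.exp |w.im| := by
  have h₁ : ‖exp (w * I)‖ ≤ Real.exp |w.im| := by
    rw [norm_exp]
    exact Real.exp_le_exp.2 (by simp [neg_le_abs])
  have h₂ : ‖exp (-w * I)‖ ≤ Real.exp |w.im| := by
    rw [norm_exp]
    exact Real.exp_le_exp.2 (by simp [le_abs_self])
  calc ‖cos w‖ = ‖exp (w * I) + exp (-w * I)‖ / 2 := by rw [cos, norm_div, Complex.norm_two]
    _ ≤ (‖exp (w * I)‖ + ‖exp (-w * I)‖) / 2 := by gcongr; exact norm_add_le _ _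
    _ ≤ Real.exp |w.im| := by linarith

lemma convex_setOf_abs_im_le (M : ℝ) : Convex ℝ {w : ℂ | |w.im| ≤ M} := by
  simpa only [abs_le, Set.ofPred_and] using
    (convex_halfSpace_im_ge (-M)).inter (convex_halfSpace_im_le M)

lemma norm_sin_sub_sin_le {M : ℝ} {z w : ℂ} (hz : |z.im| ≤ M) (hw : |w.im| ≤ M) :
    ‖sin z - sin w‖ ≤ Real.exp M * ‖z - w‖ :=
  (convex_setOf_abs_im_le M).norm_image_sub_le_of_norm_hasDerivWithin_le
    (fun u _ => (hasDerivAt_sin u).hasDerivWithinAt)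
    (fun u hu => (norm_cos_le_exp_abs_im u).trans (Real.exp_le_exp.2 hu)) hw hz

end Complex

section PointNearRealAxis

variable {z : ℂ} {τ ℓ : ℝ}

lemma abs_im_mul_ofReal_le (hℓ : 0 ≤ ℓ) : |(z * ℓ).im| ≤ ‖z - τ‖ * ℓ := by
  have h := Complex.abs_im_le_norm (z - τ)
  rw [sub_im, ofReal_im, sub_zero] at h
  rw [mul_im, ofReal_re, ofReal_im, mul_zero, zero_add, abs_mul, abs_of_nonneg hℓ]
  exact mul_le_mul_of_nonneg_right h hℓ

lemma norm_cos_mul_ofReal_le (hℓ : 0 ≤ ℓ) (h : ‖z - τ‖ * ℓ ≤ 1) :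
    ‖cos (z * ℓ)‖ ≤ Real.exp 1 :=
  (norm_cos_le_exp_abs_im _).trans (Real.exp_le_exp.2 ((abs_im_mul_ofReal_le hℓ).trans h))

lemma abs_sin_sub_le_norm_sin_mul_ofReal (hℓ : 0 ≤ ℓ) (h : ‖z - τ‖ * ℓ ≤ 1) :
    |Real.sin (τ * ℓ)| - Real.exp 1 * (‖z - τ‖ * ℓ) ≤ ‖sin (z * ℓ)‖ := by
  have hτ : |((τ : ℂ) * ℓ).im| ≤ 1 := by
    simpa only [← ofReal_mul, ofReal_im, abs_zero] using zero_le_one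
  have hlip := norm_sin_sub_sin_le ((abs_im_mul_ofReal_le hℓ).trans h) hτ
  rw [← sub_mul, norm_mul, norm_real, Real.norm_of_nonneg hℓ] at hlip
  have hsin : ‖sin ((τ : ℂ) * ℓ)‖ = |Real.sin (τ * ℓ)| := by
    rw [← ofReal_mul, ← ofReal_sin, norm_real, Real.norm_eq_abs]
  have htri := norm_sub_norm_le (sin ((τ : ℂ) * ℓ)) (sin (z * ℓ))
  rw [norm_sub_rev] at htri
  linarith

lemma norm_sq_mul_cos_div_sin_cube_le {ρ : ℝ} (hℓ : 0 < ℓ) (hρ : 0 < ρ)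
    (hsin : ℓ * ρ ≤ Real.sin (τ * ℓ) ^ 2) (hz : ‖z - τ‖ ≤ ρ / (16 * Real.exp 1)) :
    ‖(ℓ : ℂ) ^ 2 * cos (z * ℓ) / sin (z * ℓ) ^ 3‖ ≤ 8 * Real.exp 1 / ρ ^ (3 / 2 : ℝ) * √ℓ := by
  have he : 1 ≤ Real.exp 1 := Real.one_le_exp zero_le_one
  have hx : 0 < ℓ * ρ := mul_pos hℓ hρ
  have hx₁ : ℓ * ρ ≤ 1 := hsin.trans (Real.sin_sq_le_one _)
  have hδ : Real.exp 1 * (‖z - τ‖ * ℓ) ≤ ℓ * ρ / 16 := by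
    have := mul_le_mul_of_nonneg_left hz (mul_nonneg (Real.exp_pos 1).le hℓ.le)
    field_simp at this ⊢
    linarith
  have hδ₁ : ‖z - τ‖ * ℓ ≤ 1 := by nlinarith [norm_nonneg (z - τ)]
  have hsqrt : ℓ * ρ ≤ √(ℓ * ρ) := by
    nlinarith [Real.sq_sqrt hx.le, Real.sqrt_le_one.2 hx₁, Real.sqrt_nonneg (ℓ * ρ)]
  have hsin_τ : √(ℓ * ρ) ≤ |Real.sin (τ * ℓ)| := by
    rw [← Real.sqrt_sq_eq_abs]
    exact Real.sqrt_le_sqrt hsin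
  have hsin_z : √(ℓ * ρ) / 2 ≤ ‖sin (z * ℓ)‖ := by
    linarith [abs_sin_sub_le_norm_sin_mul_ofReal hℓ.le hδ₁]
  have hρ_pow : ρ ^ (3 / 2 : ℝ) = √ρ ^ 3 := by
    rw [Real.sqrt_eq_rpow, ← Real.rpow_natCast, ← Real.rpow_mul hρ.le]
    norm_num
  have hℓ_sq : ℓ = √ℓ ^ 2 := (Real.sq_sqrt hℓ.le).symm
  have hsqrt_ℓ : 0 < √ℓ := Real.sqrt_pos.2 hℓ
  calc ‖(ℓ : ℂ) ^ 2 * cos (z * ℓ) / sin (z * ℓ) ^ 3‖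
      = ℓ ^ 2 * ‖cos (z * ℓ)‖ / ‖sin (z * ℓ)‖ ^ 3 := by
        rw [norm_div, norm_mul, norm_pow, norm_pow, norm_real, Real.norm_of_nonneg hℓ.le]
    _ ≤ ℓ ^ 2 * Real.exp 1 / (√(ℓ * ρ) / 2) ^ 3 := by
        gcongr
        exact norm_cos_mul_ofReal_le hℓ.le hδ₁
    _ = 8 * Real.exp 1 / ρ ^ (3 / 2 : ℝ) * √ℓ := by
        rw [hρ_pow, Real.sqrt_mul hℓ.le, hℓ_sq, Real.sqrt_sq hsqrt_ℓ.le]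
        field_simp
        ring

end PointNearRealAxis

lemma mul_inv_sum_div_le {ι : Type*} [Fintype ι] {a b : ι → ℝ} (ha : ∀ i, 0 < a i)
    (hb : ∀ i, 0 < b i) (j : ι) : a j * (∑ i, a i / b i)⁻¹ ≤ b j := by
  have hterm : a j / b j ≤ ∑ i, a i / b i :=
    single_le_sum (fun i _ => (div_pos (ha i) (hb i)).le) (mem_univ j)
  have hsum : 0 < ∑ i, a i / b i := (div_pos (ha j) (hb j)).trans_le hterm
  rw [mul_inv_le_iff₀ hsum]
  rwa [div_le_iff₀ (hb j), mul_comm] at hterm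

theorem psi0_second_derivative_bound_general (N : ℕ)
    (ℓ : Fin N → ℝ) (hℓ : ∀ j, 0 < ℓ j)
    (τ : ℝ) (hsin : ∀ j, Real.sin (τ * ℓ j) ≠ 0)
    (ρ : ℝ) (hρ : ρ = (∑ j : Fin N, ℓ j / Real.sin (τ * ℓ j) ^ 2)⁻¹)
    (z : ℂ) (hz : ‖(z - (τ : ℂ))‖ ≤ (1 / (16 * Real.exp 1 * N)) * ρ) :
    ‖(-2 * ∑ j : Fin N,
        ((ℓ j : ℂ) ^ 2 * Complex.cos (z * (ℓ j : ℂ)) / Complex.sin (z * (ℓ j : ℂ)) ^ 3))‖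
      ≤ (16 * Real.exp 1 / ρ ^ ((3 : ℝ) / 2)) * ∑ j : Fin N, Real.sqrt (ℓ j) := by
  have hsin_sq : ∀ j, 0 < Real.sin (τ * ℓ j) ^ 2 := fun j => pow_two_pos_of_ne_zero (hsin j)
  have hterm : ∀ j, ‖(ℓ j : ℂ) ^ 2 * cos (z * ℓ j) / sin (z * ℓ j) ^ 3‖
      ≤ 8 * Real.exp 1 / ρ ^ (3 / 2 : ℝ) * √(ℓ j) := by
    intro j
    have hρ_pos : 0 < ρ := hρ ▸ inv_pos.2
      (sum_pos (fun i _ => div_pos (hℓ i) (hsin_sq i)) ⟨j, mem_univ j⟩)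
    have hN : (1 : ℝ) ≤ N := by exact_mod_cast j.pos
    have hz' : ‖z - τ‖ ≤ ρ / (16 * Real.exp 1) :=
      calc ‖z - τ‖ ≤ ρ / (16 * Real.exp 1 * N) := by rwa [one_div_mul_eq_div] at hz
        _ ≤ ρ / (16 * Real.exp 1) :=
          div_le_div_of_nonneg_left hρ_pos.le (by positivity)
            (le_mul_of_one_le_right (by positivity) hN)
    exact norm_sq_mul_cos_div_sin_cube_le (hℓ j) hρ_pos (hρ ▸ mul_inv_sum_div_le hℓ hsin_sq j) hz'
  calc ‖-2 * ∑ j, (ℓ j : ℂ) ^ 2 * cos (z * ℓ j) / sin (z * ℓ j) ^ 3‖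
      = 2 * ‖∑ j, (ℓ j : ℂ) ^ 2 * cos (z * ℓ j) / sin (z * ℓ j) ^ 3‖ := by
        rw [norm_mul, norm_neg, Complex.norm_two]
    _ ≤ 2 * ∑ j, 8 * Real.exp 1 / ρ ^ (3 / 2 : ℝ) * √(ℓ j) := by
        gcongr
        exact (norm_sum_le _ _).trans (sum_le_sum fun j _ => hterm j)
    _ = 16 * Real.exp 1 / ρ ^ ((3 : ℝ) / 2) * ∑ j, √(ℓ j) := by
        rw [← mul_sum]
        ring

/-- Bound on the second derivative of the secular function:
`|ψ₀''(z)| = |−2∑ ℓ_j² cos(zℓ_j)/sin(zℓ_j)³| ≤ (16e/ρ^{3/2}) ∑ √ℓ_j`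
on the disk `D(τ, γ₀ ρ)`. -/
theorem psi0_second_derivative_bound (N : ℕ) (hN : 2 ≤ N)
    (ℓ : Fin N → ℝ) (hℓ : ∀ j, 0 < ℓ j)
    (τ : ℝ) (hτ : 0 < τ) (hsin : ∀ j, Real.sin (τ * ℓ j) ≠ 0)
    (hzero : ∑ j : Fin N, Real.cot (τ * ℓ j) = 0)
    (ρ : ℝ) (hρ : ρ = (∑ j : Fin N, ℓ j / Real.sin (τ * ℓ j) ^ 2)⁻¹)
    (z : ℂ) (hz : ‖(z - (τ : ℂ))‖ ≤ (1 / (16 * Real.exp 1 * N)) * ρ) :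
    ‖(-2 * ∑ j : Fin N,
        ((ℓ j : ℂ) ^ 2 * Complex.cos (z * (ℓ j : ℂ)) / Complex.sin (z * (ℓ j : ℂ)) ^ 3))‖
      ≤ (16 * Real.exp 1 / ρ ^ ((3 : ℝ) / 2)) * ∑ j : Fin N, Real.sqrt (ℓ j) :=
  psi0_second_derivative_bound_general N ℓ hℓ τ hsin ρ hρ z hz
end

section
/- Let N ≥ 2, ℓ_1,...,ℓ_N > 0, τ > 0 with sin(τℓ_j) ≠ 0 for all j and ∑_j cot(τℓ_j) = 0, ρ = (∑_j ℓ_j/sin²(τℓ_j))^{-1}, γ_0 = 1/(16eN). Then for every γ ∈ (0,γ_0], every z ∈ ℂ with |z − τ| ≤ γρ, and every j, one has |sin(zℓ_j)| ≥ (ℓ_j ρ)^{1/2}/2. -/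
open Complex Real Finset

/-!
By the definition of `ρ`, the `j`-th summand alone gives `ℓ_j ρ ≤ sin²(τ ℓ_j)`, so
`|sin(τ ℓ_j)| ≥ √(ℓ_j ρ)`. On the strip `|Im w| ≤ 1` the derivative `cos` of `sin` is bounded by
`e`, so moving from `τ ℓ_j` to `z ℓ_j` changes `sin` by at most `e γ ρ ℓ_j`, which the smallness
of `γ` makes at most `√(ℓ_j ρ)/2` (using `ℓ_j ρ ≤ 1`).
-/

theorem Complex.norm_cos_le_exp_abs_im_s11 (w : ℂ) : ‖Complex.cos w‖ ≤ Real.exp |w.im| := by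
  have hexp : ∀ u : ℂ, ‖Complex.exp (u * I)‖ ≤ Real.exp |u.im| := fun u => by
    rw [Complex.norm_exp]
    gcongr
    simpa using neg_le_abs u.im
  calc ‖Complex.cos w‖ = ‖Complex.exp (w * I) + Complex.exp (-w * I)‖ / 2 := by
        rw [Complex.cos, norm_div, Complex.norm_two]
    _ ≤ (Real.exp |w.im| + Real.exp |(-w).im|) / 2 := by
        gcongr
        exact (norm_add_le _ _).trans (add_le_add (hexp w) (hexp (-w)))
    _ = Real.exp |w.im| := by rw [neg_im, abs_neg]; ring

theorem Complex.norm_sin_sub_sin_le_s11 {r : ℝ} {a b : ℂ} (ha : |a.im| ≤ r) (hb : |b.im| ≤ r) :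
    ‖Complex.sin a - Complex.sin b‖ ≤ Real.exp r * ‖a - b‖ := by
  have hstrip : Convex ℝ {w : ℂ | |w.im| ≤ r} := by
    simpa only [abs_le, Set.ofPred_and] using (convex_halfSpace_im_ge (-r)).inter (convex_halfSpace_im_le r)
  exact hstrip.norm_image_sub_le_of_norm_hasDerivWithin_le
    (fun w _ => (Complex.hasDerivAt_sin w).hasDerivWithinAt)
    (fun w hw => (Complex.norm_cos_le_exp_abs_im_s11 w).trans (Real.exp_le_exp.2 hw)) hb ha

theorem Complex.abs_sin_sub_le_norm_sin {r x : ℝ} {w : ℂ} (hw : ‖w - x‖ ≤ r) :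
    |Real.sin x| - Real.exp r * ‖w - x‖ ≤ ‖Complex.sin w‖ := by
  have hwim : |w.im| ≤ r := by
    simpa using (Complex.abs_im_le_norm (w - x)).trans hw
  have hxim : |(x : ℂ).im| ≤ r := by
    simpa using (norm_nonneg _).trans hw
  have hlip := Complex.norm_sin_sub_sin_le_s11 hwim hxim
  have htri := norm_sub_norm_le (Complex.sin x) (Complex.sin x - Complex.sin w)
  rw [sub_sub_cancel, norm_sub_rev] at htri
  have hsinx : ‖Complex.sin x‖ = |Real.sin x| := by
    rw [← Complex.ofReal_sin, Complex.norm_real, Real.norm_eq_abs]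
  linarith

theorem mul_inv_sum_div_sq_le {ι : Type*} [Fintype ι] {ℓ s : ι → ℝ} (hℓ : ∀ i, 0 ≤ ℓ i)
    {j : ι} (hs : s j ≠ 0) : ℓ j * (∑ i, ℓ i / s i ^ 2)⁻¹ ≤ s j ^ 2 := by
  rcases (hℓ j).eq_or_lt with hj | hj
  · rw [← hj, zero_mul]
    positivity
  have hterm : 0 < ℓ j / s j ^ 2 := by positivity
  have hsingle : ℓ j / s j ^ 2 ≤ ∑ i, ℓ i / s i ^ 2 :=
    single_le_sum (fun i _ => div_nonneg (hℓ i) (sq_nonneg (s i))) (mem_univ j)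
  calc ℓ j * (∑ i, ℓ i / s i ^ 2)⁻¹ ≤ ℓ j * (ℓ j / s j ^ 2)⁻¹ := by
        gcongr
    _ = s j ^ 2 := by field_simp

theorem sin_lower_bound_general (N : ℕ) (ℓ : Fin N → ℝ) (hℓ : ∀ j, 0 < ℓ j)
    (τ : ℝ) (hsin : ∀ j, Real.sin (τ * ℓ j) ≠ 0)
    (ρ : ℝ) (hρ : ρ = (∑ j : Fin N, ℓ j / Real.sin (τ * ℓ j) ^ 2)⁻¹)
    (γ : ℝ) (hγ : γ ∈ Set.Ioc 0 (1 / (16 * Real.exp 1 * N)))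
    (z : ℂ) (hz : ‖z - (τ : ℂ)‖ ≤ γ * ρ) :
    ∀ j : Fin N, Real.sqrt (ℓ j * ρ) / 2 ≤ ‖Complex.sin (z * (ℓ j : ℂ))‖ := by
  intro j
  obtain ⟨-, hγ⟩ := hγ
  have hρ0 : 0 ≤ ρ := hρ ▸ inv_nonneg.2 (sum_nonneg fun i _ => by have := hℓ i; positivity)
  have hℓρ0 : 0 ≤ ℓ j * ρ := mul_nonneg (hℓ j).le hρ0
  have hℓρ : ℓ j * ρ ≤ Real.sin (τ * ℓ j) ^ 2 :=
    hρ ▸ mul_inv_sum_div_sq_le (fun i => (hℓ i).le) (hsin j)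
  have hℓρ1 : ℓ j * ρ ≤ 1 := hℓρ.trans (Real.sin_sq_le_one _)
  have hsqrt : Real.sqrt (ℓ j * ρ) ≤ |Real.sin (τ * ℓ j)| :=
    Real.sqrt_le_sqrt hℓρ |>.trans_eq (Real.sqrt_sq_eq_abs _)
  have hγe : Real.exp 1 * γ ≤ 1 / 2 := by
    have hN : (1 : ℝ) ≤ N := by exact_mod_cast j.pos
    have := Real.exp_pos 1
    calc Real.exp 1 * γ ≤ Real.exp 1 * (1 / (16 * Real.exp 1 * N)) := by gcongr
      _ = 1 / (16 * N) := by field_simp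
      _ ≤ 1 / 2 := by gcongr; linarith
  have hdist : ‖z * ℓ j - ((τ * ℓ j : ℝ) : ℂ)‖ ≤ γ * (ℓ j * ρ) := by
    rw [Complex.ofReal_mul, ← sub_mul, norm_mul, Complex.norm_real, Real.norm_of_nonneg (hℓ j).le]
    nlinarith [hℓ j]
  have hradius : γ * (ℓ j * ρ) ≤ 1 := by nlinarith [Real.add_one_le_exp 1]
  have hshift : Real.exp 1 * ‖z * ℓ j - ((τ * ℓ j : ℝ) : ℂ)‖ ≤ Real.sqrt (ℓ j * ρ) / 2 :=
    calc Real.exp 1 * ‖z * ℓ j - ((τ * ℓ j : ℝ) : ℂ)‖ ≤ Real.exp 1 * γ * (ℓ j * ρ) := by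
          rw [mul_assoc]; gcongr
      _ ≤ 1 / 2 * Real.sqrt (ℓ j * ρ) := by
          gcongr
          exact Real.le_sqrt_of_sq_le (by nlinarith)
      _ = Real.sqrt (ℓ j * ρ) / 2 := by ring
  linarith [Complex.abs_sin_sub_le_norm_sin (hdist.trans hradius)]

/-- Lower bound `|sin(z ℓ_j)| ≥ √(ℓ_j ρ)/2` on the disk `D(τ, γρ)`, `γ ∈ (0, γ₀]`. -/
theorem sin_lower_bound (N : ℕ) (hN : 2 ≤ N) (ℓ : Fin N → ℝ) (hℓ : ∀ j, 0 < ℓ j)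
    (τ : ℝ) (hτ : 0 < τ) (hsin : ∀ j, Real.sin (τ * ℓ j) ≠ 0)
    (hzero : ∑ j : Fin N, Real.cot (τ * ℓ j) = 0)
    (ρ : ℝ) (hρ : ρ = (∑ j : Fin N, ℓ j / Real.sin (τ * ℓ j) ^ 2)⁻¹)
    (γ : ℝ) (hγ : γ ∈ Set.Ioc 0 (1 / (16 * Real.exp 1 * N)))
    (z : ℂ) (hz : ‖z - (τ : ℂ)‖ ≤ γ * ρ) :
    ∀ j : Fin N, Real.sqrt (ℓ j * ρ) / 2 ≤ ‖Complex.sin (z * (ℓ j : ℂ))‖ :=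
  sin_lower_bound_general N ℓ hℓ τ hsin ρ hρ γ hγ z hz
end

section
/- Let y ∈ ℝ^N with sin(y_j) ≠ 0 for all j and ∑_j cot(y_j) = 0. Suppose the gradient vectors ∇Φ̃(y) = Φ(y)²·(ℓ_1 cos(y_1)/sin³(y_1), ..., ℓ_N cos(y_N)/sin³(y_N)) and ∇Ψ(y) = (1/sin²(y_1), ..., 1/sin²(y_N)) are ℝ-linearly dependent. Then y_j ≡ π/2 mod π for every j ∈ {1,...,N}. -/
open Real Finset

/-! Multiplying the `j`-th relation by `sin² y_j` turns it into `a c ℓ_j cot y_j + b = 0`, with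
`c = Φ̃(y)²`: the products `ℓ_j · (a c cot y_j)` are all equal. Numbers `t_j` with `∑ t_j = 0` and
`ℓ_j t_j` constant vanish, since then `∑ ℓ_j t_j² = const · ∑ t_j = 0`. Hence `b = 0`, so `a ≠ 0`, and
`cot y_j = 0` for every `j`. -/

theorem eq_zero_of_sum_eq_zero_of_mul_eq_const {R ι : Type*} [CommRing R] [LinearOrder R]
    [IsStrictOrderedRing R] [Fintype ι] {w t : ι → R} {K : R} (hw : ∀ i, 0 < w i)
    (hK : ∀ i, w i * t i = K) (hsum : ∑ i, t i = 0) (i : ι) : t i = 0 := by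
  have hsq : ∑ i, w i * t i ^ 2 = 0 :=
    calc ∑ i, w i * t i ^ 2 = ∑ i, K * t i := sum_congr rfl fun i _ => by rw [← hK i]; ring
      _ = 0 := by rw [← mul_sum, hsum, mul_zero]
  have hi := (sum_eq_zero_iff_of_nonneg fun i _ => by have := hw i; positivity).1 hsq i (mem_univ i)
  exact pow_eq_zero_iff two_ne_zero |>.1 <| (mul_eq_zero.1 hi).resolve_left (hw i).ne'

theorem Real.mul_cot_add_eq_zero {x p b : ℝ} (hx : sin x ≠ 0)
    (h : p * (cos x / sin x ^ 3) + b * (1 / sin x ^ 2) = 0) : p * cot x + b = 0 := by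
  rw [cot_eq_cos_div_sin]
  field_simp at h ⊢
  linear_combination h

theorem Real.cos_eq_zero_of_cot_eq_zero {x : ℝ} (hx : sin x ≠ 0) (h : cot x = 0) : cos x = 0 := by
  rwa [cot_eq_cos_div_sin, div_eq_zero_iff, or_iff_left hx] at h

theorem gradients_dependent_general (N : ℕ) (ℓ : Fin N → ℝ) (hℓ : ∀ j, 0 < ℓ j)
    (y : Fin N → ℝ) (hsin : ∀ j, Real.sin (y j) ≠ 0)
    (hΨ : ∑ j : Fin N, Real.cot (y j) = 0)
    (a b : ℝ) (hab : ¬(a = 0 ∧ b = 0))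
    (hdep : ∀ j : Fin N,
      a * ((2 / ∑ k : Fin N, ℓ k / Real.sin (y k) ^ 2) ^ 2
            * (ℓ j * Real.cos (y j) / Real.sin (y j) ^ 3))
        + b * (1 / Real.sin (y j) ^ 2) = 0) :
    ∀ j : Fin N, ∃ m : ℤ, y j = Real.pi / 2 + m * Real.pi := by
  intro j₀
  set c := (2 / ∑ k : Fin N, ℓ k / sin (y k) ^ 2) ^ 2
  have hrel : ∀ j, ℓ j * (a * c * cot (y j)) = -b := fun j => by
    have h : a * c * ℓ j * (cos (y j) / sin (y j) ^ 3) + b * (1 / sin (y j) ^ 2) = 0 := by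
      rw [← hdep j]; ring
    linear_combination mul_cot_add_eq_zero (hsin j) h
  have hzero := eq_zero_of_sum_eq_zero_of_mul_eq_const hℓ hrel (by rw [← mul_sum, hΨ, mul_zero])
  have hb : b = 0 := by linear_combination hrel j₀ - ℓ j₀ * hzero j₀
  have ha : a ≠ 0 := fun ha => hab ⟨ha, hb⟩
  have hc : c ≠ 0 := by
    have : 0 < ∑ k : Fin N, ℓ k / sin (y k) ^ 2 :=
      sum_pos (fun k _ => div_pos (hℓ k) (pow_two_pos_of_ne_zero (hsin k))) ⟨j₀, mem_univ j₀⟩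
    positivity
  have hcos : cos (y j₀) = 0 :=
    cos_eq_zero_of_cot_eq_zero (hsin j₀) ((mul_eq_zero.1 (hzero j₀)).resolve_left (mul_ne_zero ha hc))
  obtain ⟨k, hk⟩ := cos_eq_zero_iff.1 hcos
  exact ⟨k, by rw [hk]; ring⟩

/-- If on `Z_∅` the gradients of `Φ̃` and `Ψ` are linearly dependent, then
`y_j ≡ π/2 mod π` for every `j`. -/
theorem gradients_dependent (N : ℕ) (hN : 2 ≤ N) (ℓ : Fin N → ℝ) (hℓ : ∀ j, 0 < ℓ j)
    (y : Fin N → ℝ) (hsin : ∀ j, Real.sin (y j) ≠ 0)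
    (hΨ : ∑ j : Fin N, Real.cot (y j) = 0)
    (a b : ℝ) (hab : ¬(a = 0 ∧ b = 0))
    (hdep : ∀ j : Fin N,
      a * ((2 / ∑ k : Fin N, ℓ k / Real.sin (y k) ^ 2) ^ 2
            * (ℓ j * Real.cos (y j) / Real.sin (y j) ^ 3))
        + b * (1 / Real.sin (y j) ^ 2) = 0) :
    ∀ j : Fin N, ∃ m : ℤ, y j = Real.pi / 2 + m * Real.pi :=
  gradients_dependent_general N ℓ hℓ y hsin hΨ a b hab hdep
end

section
/- Let N ≥ 2 and ℓ ∈ (0,∞)^N, and define Ψ_τ = −∑_{j=1}^N cot(τℓ_j) for τ > 0 with τℓ_j ∉ πℤ for all j. Then in each connected component I of (0,∞) \ ∪_j (πℤ/ℓ_j), the function τ ↦ Ψ_τ is strictly increasing, tends to −∞ at the left endpoint of I and to +∞ at the right endpoint, and hence has exactly one zero in I. -/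
open Real Finset Filter Topology

/-!
On a component of the complement of the Dirichlet set each term `-cot (τ ℓ_j)` has derivative
`ℓ_j / sin² (τ ℓ_j) > 0`, so `Ψ` is strictly increasing there. At an endpoint some `τ ℓ_j` reaches
`πℤ`, where `cot` has a pole whose sign is fixed by the side of approach, while every other term
stays bounded on that side. Strict monotonicity and the intermediate value theorem then give
exactly one zero.
-/

namespace Real

lemma cot_eq_tan_pi_div_two_sub (x : ℝ) : cot x = tan (π / 2 - x) := by
  rw [tan_pi_div_two_sub, ← cot_inv_eq_tan, inv_inv]

lemma tendsto_cot_nhdsGT_int_mul_pi (m : ℤ) : Tendsto cot (𝓝[>] (m * π)) atTop := by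
  have hu : Tendsto (fun x => π / 2 + m * π - x) (𝓝[>] (m * π)) (𝓝[<] (π / 2)) := by
    have := (continuous_const.sub continuous_id).continuousWithinAt.tendsto_nhdsWithin
      (f := fun x : ℝ => π / 2 + m * π - x) (x := m * π) (s := Set.Ioi (m * π))
      (t := Set.Iio (π / 2 + m * π - m * π)) fun x (hx : m * π < x) => sub_lt_sub_left hx _
    simpa using this
  refine (tendsto_tan_pi_div_two.comp hu).congr fun x => ?_
  rw [Function.comp_apply, cot_eq_tan_pi_div_two_sub, ← tan_periodic.int_mul m (π / 2 - x)]
  ring_nf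

lemma tendsto_cot_nhdsLT_int_mul_pi (m : ℤ) : Tendsto cot (𝓝[<] (m * π)) atBot := by
  have hu : Tendsto (fun x => -(π / 2) + m * π - x) (𝓝[<] (m * π)) (𝓝[>] (-(π / 2))) := by
    have := (continuous_const.sub continuous_id).continuousWithinAt.tendsto_nhdsWithin
      (f := fun x : ℝ => -(π / 2) + m * π - x) (x := m * π)
      (s := Set.Iio (m * π)) (t := Set.Ioi (-(π / 2) + m * π - m * π))
      fun x (hx : x < m * π) => sub_lt_sub_left hx _
    simpa using this
  refine (tendsto_tan_neg_pi_div_two.comp hu).congr fun x => ?_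
  rw [Function.comp_apply, cot_eq_tan_pi_div_two_sub, ← tan_periodic.int_mul (m - 1) (π / 2 - x)]
  push_cast
  ring_nf

lemma hasDerivAt_cot {x : ℝ} (hx : sin x ≠ 0) : HasDerivAt cot (-1 / sin x ^ 2) x := by
  have h := (hasDerivAt_cos x).fun_div (hasDerivAt_sin x) hx
  rwa [show -sin x * sin x - cos x * cos x = -1 by linear_combination -sin_sq_add_cos_sq x,
    ← funext cot_eq_cos_div_sin] at h

lemma isBoundedUnder_ge_cot_nhdsGT (x : ℝ) : (𝓝[>] x).IsBoundedUnder (· ≥ ·) cot := by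
  by_cases hx : sin x = 0
  · obtain ⟨m, rfl⟩ := sin_eq_zero_iff.1 hx
    exact (tendsto_cot_nhdsGT_int_mul_pi m).isBoundedUnder_ge_atTop
  · exact ((hasDerivAt_cot hx).continuousAt.tendsto.mono_left nhdsWithin_le_nhds).isBoundedUnder_ge

lemma isBoundedUnder_le_cot_nhdsLT (x : ℝ) : (𝓝[<] x).IsBoundedUnder (· ≤ ·) cot := by
  by_cases hx : sin x = 0
  · obtain ⟨m, rfl⟩ := sin_eq_zero_iff.1 hx
    exact (tendsto_cot_nhdsLT_int_mul_pi m).isBoundedUnder_le_atBot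
  · exact ((hasDerivAt_cot hx).continuousAt.tendsto.mono_left nhdsWithin_le_nhds).isBoundedUnder_le

end Real

namespace Filter

variable {ι α G : Type*} [AddCommGroup G] [PartialOrder G] [IsOrderedAddMonoid G]
  {l : Filter α} {s : Finset ι} {f : ι → α → G} {j : ι}

lemma tendsto_finset_sum_atTop (hj : j ∈ s) (hfj : Tendsto (f j) l atTop)
    (hf : ∀ i ∈ s, l.IsBoundedUnder (· ≥ ·) (f i)) :
    Tendsto (fun x => ∑ i ∈ s, f i x) l atTop := by
  classical
  obtain ⟨C, hC⟩ := isBoundedUnder_ge_sum (s.erase j) fun i hi => hf i (mem_of_mem_erase hi)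
  simp_rw [← add_sum_erase s _ hj]
  exact tendsto_atTop_add_right_of_le' l C hfj (by simpa using hC)

lemma tendsto_finset_sum_atBot (hj : j ∈ s) (hfj : Tendsto (f j) l atBot)
    (hf : ∀ i ∈ s, l.IsBoundedUnder (· ≤ ·) (f i)) :
    Tendsto (fun x => ∑ i ∈ s, f i x) l atBot :=
  tendsto_finset_sum_atTop (G := Gᵒᵈ) hj hfj hf

end Filter

theorem StrictMonoOn.existsUnique_eq_of_tendsto {α δ : Type*}
    [ConditionallyCompleteLinearOrder α] [TopologicalSpace α] [OrderTopology α] [DenselyOrdered α]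
    [LinearOrder δ] [TopologicalSpace δ] [OrderClosedTopology δ] {f : α → δ} {a b : α} (hab : a < b)
    (hmono : StrictMonoOn f (Set.Ioo a b)) (hf : ContinuousOn f (Set.Ioo a b))
    (ha : Tendsto f (𝓝[>] a) atBot) (hb : Tendsto f (𝓝[<] b) atTop) (y : δ) :
    ∃! x, x ∈ Set.Ioo a b ∧ f x = y := by
  obtain ⟨x, hx, rfl⟩ := hf.surjOn_of_tendsto (Set.nonempty_Ioo.2 hab)
    ((tendsto_comp_coe_Ioo_atBot hab).2 ha) ((tendsto_comp_coe_Ioo_atTop hab).2 hb)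
    (Set.mem_univ y)
  exact ⟨x, ⟨hx, rfl⟩, fun x' hx' => hmono.injOn hx'.1 hx hx'.2⟩

section
variable {𝕜 : Type*} [Semiring 𝕜] [PartialOrder 𝕜] [MulPosStrictMono 𝕜] [TopologicalSpace 𝕜]
  [ContinuousMul 𝕜] {c : 𝕜}

lemma tendsto_mul_const_nhdsGT (hc : 0 < c) (x : 𝕜) :
    Tendsto (· * c) (𝓝[>] x) (𝓝[>] (x * c)) :=
  (continuous_mul_const c).continuousWithinAt.tendsto_nhdsWithin fun _ hy =>
    mul_lt_mul_of_pos_right hy hc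

lemma tendsto_mul_const_nhdsLT (hc : 0 < c) (x : 𝕜) :
    Tendsto (· * c) (𝓝[<] x) (𝓝[<] (x * c)) :=
  (continuous_mul_const c).continuousWithinAt.tendsto_nhdsWithin fun _ hy =>
    mul_lt_mul_of_pos_right hy hc

end

section
variable {ι : Type*} [Fintype ι] {ℓ : ι → ℝ}

-- `Ψ` in the paper's notation.
noncomputable def negSumCot (ℓ : ι → ℝ) (τ : ℝ) : ℝ := -∑ j, cot (τ * ℓ j)

lemma hasDerivAt_negSumCot {τ : ℝ} (h : ∀ j, sin (τ * ℓ j) ≠ 0) :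
    HasDerivAt (negSumCot ℓ) (∑ j, ℓ j / sin (τ * ℓ j) ^ 2) τ := by
  refine (HasDerivAt.fun_sum (u := univ) fun j _ =>
    (hasDerivAt_cot (h j)).comp τ (hasDerivAt_mul_const (ℓ j))).neg.congr_deriv ?_
  rw [← sum_neg_distrib]
  exact sum_congr rfl fun j _ => by ring

lemma continuousOn_negSumCot {s : Set ℝ} (h : ∀ τ ∈ s, ∀ j, sin (τ * ℓ j) ≠ 0) :
    ContinuousOn (negSumCot ℓ) s :=
  fun τ hτ => (hasDerivAt_negSumCot (h τ hτ)).continuousAt.continuousWithinAt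

lemma strictMonoOn_negSumCot [Nonempty ι] (hℓ : ∀ j, 0 < ℓ j) {s : Set ℝ} (hs : Convex ℝ s)
    (h : ∀ τ ∈ s, ∀ j, sin (τ * ℓ j) ≠ 0) : StrictMonoOn (negSumCot ℓ) s :=
  strictMonoOn_of_hasDerivWithinAt_pos hs (continuousOn_negSumCot h)
    (fun τ hτ => (hasDerivAt_negSumCot (h τ (interior_subset hτ))).hasDerivWithinAt)
    fun τ hτ => sum_pos (fun j _ =>
      div_pos (hℓ j) (pow_two_pos_of_ne_zero (h τ (interior_subset hτ) j))) univ_nonempty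

lemma tendsto_negSumCot_nhdsGT (hℓ : ∀ j, 0 < ℓ j) {a : ℝ} {j : ι} {m : ℤ}
    (hm : a * ℓ j = m * π) : Tendsto (negSumCot ℓ) (𝓝[>] a) atBot := by
  refine tendsto_neg_atTop_atBot.comp (tendsto_finset_sum_atTop (mem_univ j) ?_ fun i _ => ?_)
  · exact (tendsto_cot_nhdsGT_int_mul_pi m).comp (hm ▸ tendsto_mul_const_nhdsGT (hℓ j) a)
  · exact (tendsto_mul_const_nhdsGT (hℓ i) a).isBoundedUnder_comp (isBoundedUnder_ge_cot_nhdsGT _)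

lemma tendsto_negSumCot_nhdsLT (hℓ : ∀ j, 0 < ℓ j) {b : ℝ} {j : ι} {m : ℤ}
    (hm : b * ℓ j = m * π) : Tendsto (negSumCot ℓ) (𝓝[<] b) atTop := by
  refine tendsto_neg_atBot_atTop.comp (tendsto_finset_sum_atBot (mem_univ j) ?_ fun i _ => ?_)
  · exact (tendsto_cot_nhdsLT_int_mul_pi m).comp (hm ▸ tendsto_mul_const_nhdsLT (hℓ j) b)
  · exact (tendsto_mul_const_nhdsLT (hℓ i) b).isBoundedUnder_comp (isBoundedUnder_le_cot_nhdsLT _)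

end

theorem Psi_on_component_general (N : ℕ) (ℓ : Fin N → ℝ) (hℓ : ∀ j, 0 < ℓ j)
    (a b : ℝ) (hab : a < b)
    (haT : a = 0 ∨ ∃ j : Fin N, ∃ m : ℤ, a * ℓ j = m * Real.pi)
    (hbT : ∃ j : Fin N, ∃ m : ℤ, b * ℓ j = m * Real.pi)
    (hI : ∀ τ ∈ Set.Ioo a b, ∀ j : Fin N, Real.sin (τ * ℓ j) ≠ 0) :
    StrictMonoOn (fun τ : ℝ => -∑ j : Fin N, Real.cot (τ * ℓ j)) (Set.Ioo a b) ∧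
    Tendsto (fun τ : ℝ => -∑ j : Fin N, Real.cot (τ * ℓ j)) (𝓝[>] a) atBot ∧
    Tendsto (fun τ : ℝ => -∑ j : Fin N, Real.cot (τ * ℓ j)) (𝓝[<] b) atTop ∧
    ∃! τ : ℝ, τ ∈ Set.Ioo a b ∧ -∑ j : Fin N, Real.cot (τ * ℓ j) = 0 := by
  obtain ⟨k, n, hbk⟩ := hbT
  have : Nonempty (Fin N) := ⟨k⟩
  have hmono : StrictMonoOn (negSumCot ℓ) (Set.Ioo a b) :=
    strictMonoOn_negSumCot hℓ (convex_Ioo a b) hI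
  have hbot : Tendsto (negSumCot ℓ) (𝓝[>] a) atBot := by
    obtain ⟨j, m, haj⟩ : ∃ j : Fin N, ∃ m : ℤ, a * ℓ j = m * π :=
      haT.elim (fun ha => ⟨k, 0, by simp [ha]⟩) id
    exact tendsto_negSumCot_nhdsGT hℓ haj
  have htop : Tendsto (negSumCot ℓ) (𝓝[<] b) atTop := tendsto_negSumCot_nhdsLT hℓ hbk
  exact ⟨hmono, hbot, htop,
    hmono.existsUnique_eq_of_tendsto hab (continuousOn_negSumCot hI) hbot htop 0⟩

/-- On each connected component `(a,b)` of `(0,∞) \ ⋃_j πℤ/ℓ_j`, the function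
`Ψ_τ = −∑ cot(τ ℓ_j)` is strictly increasing, tends to `−∞` at `a⁺` and `+∞` at
`b⁻`, and has exactly one zero. -/
theorem Psi_on_component (N : ℕ) (hN : 2 ≤ N) (ℓ : Fin N → ℝ) (hℓ : ∀ j, 0 < ℓ j)
    (a b : ℝ) (hab : a < b) (ha : 0 ≤ a)
    (haT : a = 0 ∨ ∃ j : Fin N, ∃ m : ℤ, a * ℓ j = m * Real.pi)
    (hbT : ∃ j : Fin N, ∃ m : ℤ, b * ℓ j = m * Real.pi)
    (hI : ∀ τ ∈ Set.Ioo a b, ∀ j : Fin N, Real.sin (τ * ℓ j) ≠ 0) :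
    StrictMonoOn (fun τ : ℝ => -∑ j : Fin N, Real.cot (τ * ℓ j)) (Set.Ioo a b) ∧
    Tendsto (fun τ : ℝ => -∑ j : Fin N, Real.cot (τ * ℓ j)) (𝓝[>] a) atBot ∧
    Tendsto (fun τ : ℝ => -∑ j : Fin N, Real.cot (τ * ℓ j)) (𝓝[<] b) atTop ∧
    ∃! τ : ℝ, τ ∈ Set.Ioo a b ∧ -∑ j : Fin N, Real.cot (τ * ℓ j) = 0 :=
  Psi_on_component_general N ℓ hℓ a b hab haT hbT hI
end
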